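/- Let 1 < p < ∞ and 0 ≤ λ < n. Suppose a sublinear operator T satisfies the modular estimate 𝔐_{p,λ}(Tf;x,r) ≤ C r^{n-λ} ( ∫_r^∞ t^{(λ-n)/p - 1} 𝔐_{p,λ}(f;x,t)^{1/p} dt )^p with C independent of x, r, f. Then T maps V_∞ L^{p,λ}(ℝ^n) into V_∞ L^{p,λ}(ℝ^n); i.e., if sup_x 𝔐_{p,λ}(f;x,r) → 0 as r → ∞, then sup_x 𝔐_{p,λ}(Tf;x,r) → 0 as r → ∞. -/
import Mathlib


open MeasureTheory Metric Set

/-- The Morrey modular `𝔐_{p,λ}(f;x,r) = r^{-λ} ∫_{B(x,r)} |f(y)|^p dy`. -/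
noncomputable def morreyModular {n : ℕ} (p lam : ℝ)
    (f : EuclideanSpace ℝ (Fin n) → ℝ) (x : EuclideanSpace ℝ (Fin n)) (r : ℝ) : ℝ :=
  r ^ (-lam) * ∫ y in ball x r, |f y| ^ p

lemma morrey_nonneg {n : ℕ} (p lam : ℝ) (f : EuclideanSpace ℝ (Fin n) → ℝ)
    (x : EuclideanSpace ℝ (Fin n)) {r : ℝ} (hr : 0 < r) :
    0 ≤ morreyModular p lam f x r :=
  mul_nonneg (Real.rpow_nonneg hr.le _)
    (integral_nonneg fun y => Real.rpow_nonneg (abs_nonneg _) _)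

/-- if a sublinear operator `T` satisfies the modular estimate
`𝔐_{p,λ}(Tf;x,r) ≤ C r^{n-λ} (∫_r^∞ t^{(λ-n)/p - 1} 𝔐_{p,λ}(f;x,t)^{1/p} dt)^p`,
then `T` preserves the vanishing property `(V_∞)`. -/
theorem singular_preserves_Vinfty {n : ℕ} (p lam : ℝ) (hp : 1 < p)
    (hlam0 : 0 ≤ lam) (hlamn : lam < n)
    (f Tf : EuclideanSpace ℝ (Fin n) → ℝ) (C : ℝ) (hC : 0 < C)
    (hest : ∀ (x : EuclideanSpace ℝ (Fin n)) (r : ℝ), 0 < r →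
      morreyModular p lam Tf x r ≤
        C * r ^ ((n : ℝ) - lam) *
          (∫ t in Ioi r, t ^ ((lam - n) / p - 1) * (morreyModular p lam f x t) ^ (1 / p)) ^ p)
    (hV : ∀ ε > (0 : ℝ), ∃ R > (0 : ℝ), ∀ r ≥ R, ∀ x, morreyModular p lam f x r ≤ ε) :
    ∀ ε > (0 : ℝ), ∃ R > (0 : ℝ), ∀ r ≥ R, ∀ x, morreyModular p lam Tf x r ≤ ε := by
  intro ε hε
  have hp0 : (0 : ℝ) < p := lt_trans one_pos hp
  set α : ℝ := (lam - n) / p with hαdef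
  have hnl : (0 : ℝ) < (n : ℝ) - lam := sub_pos.mpr hlamn
  have hα : α < 0 := div_neg_of_neg_of_pos (by linarith) hp0
  have ha : α - 1 < -1 := by linarith
  have hK : (0 : ℝ) < C * (p / ((n : ℝ) - lam)) ^ p :=
    mul_pos hC (Real.rpow_pos_of_pos (div_pos hp0 hnl) _)
  set δ : ℝ := ε / (C * (p / ((n : ℝ) - lam)) ^ p) with hδdef
  have hδ : 0 < δ := div_pos hε hK
  obtain ⟨R, hR, hRf⟩ := hV δ hδ
  refine ⟨R, hR, fun r hr x => ?_⟩
  have r0 : (0 : ℝ) < r := lt_of_lt_of_le hR hr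
  have hInt : IntegrableOn (fun t : ℝ => t ^ (α - 1) * δ ^ (1 / p)) (Ioi r) :=
    (integrableOn_Ioi_rpow_of_lt ha r0).mul_const _
  have hle : (∫ t in Ioi r, t ^ (α - 1) * (morreyModular p lam f x t) ^ (1 / p))
      ≤ ∫ t in Ioi r, t ^ (α - 1) * δ ^ (1 / p) := by
    refine integral_mono_of_nonneg ?_ hInt ?_
    · filter_upwards [self_mem_ae_restrict (measurableSet_Ioi (a := r))] with t ht
      exact mul_nonneg (Real.rpow_nonneg (le_of_lt (lt_trans r0 ht)) _)
        (Real.rpow_nonneg (morrey_nonneg p lam f x (lt_trans r0 ht)) _)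
    · filter_upwards [self_mem_ae_restrict (measurableSet_Ioi (a := r))] with t ht
      have t0 : 0 < t := lt_trans r0 ht
      exact mul_le_mul_of_nonneg_left
        (Real.rpow_le_rpow (morrey_nonneg p lam f x t0)
          (hRf t (le_of_lt (lt_of_le_of_lt hr ht)) x) (by positivity))
        (Real.rpow_nonneg t0.le _)
  have hIval : (∫ t in Ioi r, t ^ (α - 1) * δ ^ (1 / p))
      = r ^ α * (p / ((n : ℝ) - lam)) * δ ^ (1 / p) := by
    rw [integral_mul_const, integral_Ioi_rpow_of_lt ha r0]
    have : α - 1 + 1 = α := by ring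
    rw [this]
    have hαval : -r ^ α / α = r ^ α * (p / ((n : ℝ) - lam)) := by
      have hln : lam - (n : ℝ) ≠ 0 := by linarith
      rw [hαdef]
      field_simp
      ring
    rw [hαval]
  have hInonneg : 0 ≤ ∫ t in Ioi r, t ^ (α - 1) * (morreyModular p lam f x t) ^ (1 / p) := by
    refine setIntegral_nonneg measurableSet_Ioi fun t ht => ?_
    exact mul_nonneg (Real.rpow_nonneg (le_of_lt (lt_trans r0 ht)) _)
      (Real.rpow_nonneg (morrey_nonneg p lam f x (lt_trans r0 ht)) _)
  calc morreyModular p lam Tf x r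
      ≤ C * r ^ ((n : ℝ) - lam) *
        (∫ t in Ioi r, t ^ (α - 1) * (morreyModular p lam f x t) ^ (1 / p)) ^ p :=
        hest x r r0
    _ ≤ C * r ^ ((n : ℝ) - lam) * (r ^ α * (p / ((n : ℝ) - lam)) * δ ^ (1 / p)) ^ p := by
        refine mul_le_mul_of_nonneg_left ?_ (by positivity)
        exact Real.rpow_le_rpow hInonneg (hIval ▸ hle) hp0.le
    _ = ε := by
        have h1 : (r ^ α) ^ p = r ^ (lam - (n : ℝ)) := by
          rw [← Real.rpow_mul r0.le, hαdef, div_mul_cancel₀ _ hp0.ne']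
        have h2 : (δ ^ (1 / p)) ^ p = δ := by
          rw [← Real.rpow_mul hδ.le, one_div_mul_cancel hp0.ne', Real.rpow_one]
        have h3 : r ^ ((n : ℝ) - lam) * r ^ (lam - (n : ℝ)) = 1 := by
          rw [← Real.rpow_add r0]
          norm_num
        rw [Real.mul_rpow (by positivity) (Real.rpow_nonneg hδ.le _),
          Real.mul_rpow (Real.rpow_nonneg r0.le _) (by positivity), h1, h2]
        calc C * r ^ ((n : ℝ) - lam) *
              (r ^ (lam - (n : ℝ)) * (p / ((n : ℝ) - lam)) ^ p * δ)
            = (r ^ ((n : ℝ) - lam) * r ^ (lam - (n : ℝ))) *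
              (C * (p / ((n : ℝ) - lam)) ^ p * δ) := by ring
          _ = ε := by rw [h3, one_mul, hδdef, mul_div_cancel₀ _ hK.ne']
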